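/- Let n ≥ 1. For every b ∈ B with b ≠ n, every integer j ≥ 0 and every μ ∈ ℤ^{n+1}, the unrestricted one-dimensional sum of the level-1 perfect crystal of type A_n^{(1)} satisfies, in ℤ[q,q^{−1}], q^{d} · g_j(b, μ) = g_j(b, μ + d·(e_0 − e_n)), where d := μ_n − μ_0. (This is the case m = 0 of the Weyl-reflection identity for the affine index i = 0, the power of q accounting for the imaginary-root part of the weight shift.) -/
import Mathlib


open Finset

noncomputable section

/-- The indeterminate `q`, living in the field of rational functions `ℚ(q)`. -/
def q : RatFunc ℚ := RatFunc.X

/-- Energy function of the level-1 perfect crystal `B = {0,…,n}` of type `A_n^{(1)}`. -/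
def H (n : ℕ) (b b' : Fin (n + 1)) : ℤ := if b' ≤ b then 1 else 0

/-- The unrestricted one-dimensional sum `g_j(b,μ)`. -/
def g (n j : ℕ) (b : Fin (n + 1)) (μ : Fin (n + 1) → ℤ) : RatFunc ℚ :=
  ∑ p ∈ Finset.univ.filter (fun p : Fin (j + 1) → Fin (n + 1) =>
      p (Fin.last j) = b ∧
      ∀ k, ((Finset.univ.filter (fun i : Fin j => p i.castSucc = k)).card : ℤ) = μ k),
    q ^ (∑ i : Fin j, ((i : ℤ) + 1) * H n (p i.succ) (p i.castSucc))

/-- The standard basis vector `e_b` of `ℤ^{n+1}`. -/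
def e (n : ℕ) (b : Fin (n + 1)) : Fin (n + 1) → ℤ := fun k => if k = b then 1 else 0

/- ------------------------------------------------------------------- -/
/- Auxiliary material. -/

lemma q_ne : q ≠ 0 := RatFunc.X_ne_zero

/-- `d(μ) = μ_n - μ_0`. -/
def dd {n : ℕ} (μ : Fin (n + 1) → ℤ) : ℤ := μ (Fin.last n) - μ 0

/-- The reflected content `σμ = μ + d(μ)(e_0 - e_n)`. -/
def sg {n : ℕ} (μ : Fin (n + 1) → ℤ) : Fin (n + 1) → ℤ :=
  μ + dd μ • (e n 0 - e n (Fin.last n))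

lemma zero_ne_last {n : ℕ} (hn : 1 ≤ n) : (0 : Fin (n + 1)) ≠ Fin.last n := by
  intro h
  have := congrArg Fin.val h
  simp [Fin.val_last] at this
  omega

lemma e_apply {n : ℕ} (c k : Fin (n + 1)) : e n c k = if k = c then 1 else 0 := rfl

lemma sg_apply {n : ℕ} (μ : Fin (n + 1) → ℤ) (k : Fin (n + 1)) :
    sg μ k = μ k + dd μ * ((if k = 0 then 1 else 0) - (if k = Fin.last n then 1 else 0)) := by
  simp [sg, e, Pi.add_apply, Pi.sub_apply, Pi.smul_apply, smul_eq_mul]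

lemma dd_sub0 {n : ℕ} (hn : 1 ≤ n) (μ : Fin (n + 1) → ℤ) :
    dd (μ - e n 0) = dd μ + 1 := by
  have h := zero_ne_last hn
  simp [dd, e, Pi.sub_apply, h.symm]
  ring

lemma dd_subL {n : ℕ} (hn : 1 ≤ n) (μ : Fin (n + 1) → ℤ) :
    dd (μ - e n (Fin.last n)) = dd μ - 1 := by
  have h := zero_ne_last hn
  simp [dd, e, Pi.sub_apply, h]
  ring

lemma dd_subc {n : ℕ} (μ : Fin (n + 1) → ℤ) {c : Fin (n + 1)}
    (h0 : c ≠ 0) (hL : c ≠ Fin.last n) :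
    dd (μ - e n c) = dd μ := by
  simp [dd, e, Pi.sub_apply, h0.symm, hL.symm]

lemma sg_sub0 {n : ℕ} (hn : 1 ≤ n) (μ : Fin (n + 1) → ℤ) :
    sg μ - e n 0 = sg (μ - e n (Fin.last n)) := by
  funext k
  rw [Pi.sub_apply, sg_apply, sg_apply, dd_subL hn, Pi.sub_apply, e_apply, e_apply]
  ring

lemma sg_subL {n : ℕ} (hn : 1 ≤ n) (μ : Fin (n + 1) → ℤ) :
    sg μ - e n (Fin.last n) = sg (μ - e n 0) := by
  funext k
  rw [Pi.sub_apply, sg_apply, sg_apply, dd_sub0 hn, Pi.sub_apply, e_apply, e_apply]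
  ring

lemma sg_subc {n : ℕ} (μ : Fin (n + 1) → ℤ) {c : Fin (n + 1)}
    (h0 : c ≠ 0) (hL : c ≠ Fin.last n) :
    sg μ - e n c = sg (μ - e n c) := by
  funext k
  simp only [Pi.sub_apply, sg_apply, dd_subc μ h0 hL, e_apply]
  ring

lemma sg_zero {n : ℕ} : sg (0 : Fin (n + 1) → ℤ) = 0 := by
  funext k
  rw [sg_apply]
  simp [dd]

lemma sg_eq_zero {n : ℕ} (hn : 1 ≤ n) {μ : Fin (n + 1) → ℤ} (h : sg μ = 0) : μ = 0 := by
  have h0L := zero_ne_last hn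
  have h0 := congrFun h 0
  have hL := congrFun h (Fin.last n)
  rw [sg_apply] at h0 hL
  simp [h0L, h0L.symm, dd] at h0 hL
  funext k
  by_cases hk0 : k = 0
  · subst hk0; simp; omega
  · by_cases hkL : k = Fin.last n
    · subst hkL; simp; omega
    · have := congrFun h k
      rw [sg_apply] at this
      simpa [hk0, hkL] using this

lemma H_b_zero {n : ℕ} (b : Fin (n + 1)) : H n b 0 = 1 := if_pos (Fin.zero_le b)

lemma H_b_last {n : ℕ} {b : Fin (n + 1)} (hb : b ≠ Fin.last n) : H n b (Fin.last n) = 0 :=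
  if_neg (by rw [Fin.last_le_iff]; exact hb)

lemma H_last_left {n : ℕ} (c : Fin (n + 1)) : H n (Fin.last n) c = 1 := if_pos (Fin.le_last c)

lemma H_zero_left {n : ℕ} {c : Fin (n + 1)} (hc : c ≠ 0) : H n 0 c = 0 :=
  if_neg (by rw [Fin.le_zero_iff]; exact hc)

lemma g_zero_len (n : ℕ) (b : Fin (n + 1)) (ν : Fin (n + 1) → ℤ) :
    g n 0 b ν = if ν = 0 then 1 else 0 := by
  unfold g
  by_cases hν : ν = 0
  · subst hν
    rw [if_pos rfl]
    have hfil : (Finset.univ.filter (fun p : Fin (0 + 1) → Fin (n + 1) =>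
        p (Fin.last 0) = b ∧
        ∀ k, ((Finset.univ.filter (fun i : Fin 0 => p i.castSucc = k)).card : ℤ)
          = (0 : Fin (n + 1) → ℤ) k)) = {fun _ => b} := by
      ext p
      simp only [Finset.mem_filter, Finset.mem_univ, true_and, Finset.mem_singleton]
      constructor
      · rintro ⟨h1, -⟩
        funext i
        have hi : i = Fin.last 0 := by
          have hlt := i.isLt
          exact Fin.ext (by simp only [Fin.val_last]; omega)
        rw [hi, h1]
      · rintro rfl
        exact ⟨rfl, fun k => by simp⟩
    rw [hfil, Finset.sum_singleton]
    simp
  · rw [if_neg hν]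
    have hfil : (Finset.univ.filter (fun p : Fin (0 + 1) → Fin (n + 1) =>
        p (Fin.last 0) = b ∧
        ∀ k, ((Finset.univ.filter (fun i : Fin 0 => p i.castSucc = k)).card : ℤ) = ν k)) = ∅ := by
      rw [Finset.filter_eq_empty_iff]
      rintro p - ⟨-, h2⟩
      apply hν
      funext k
      have h3 := h2 k
      rw [show (Finset.univ : Finset (Fin 0)) = ∅ from rfl, Finset.filter_empty,
        Finset.card_empty, Nat.cast_zero] at h3
      exact h3.symm
    rw [hfil, Finset.sum_empty]

set_option maxHeartbeats 2000000 in
lemma g_rec (n j : ℕ) (b : Fin (n + 1)) (μ : Fin (n + 1) → ℤ) :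
    g n (j + 1) b μ =
      ∑ c : Fin (n + 1), q ^ (((j : ℤ) + 1) * H n b c) * g n j c (μ - e n c) := by
  unfold g
  simp_rw [Finset.mul_sum]
  simp_rw [← zpow_add₀ q_ne]
  rw [Finset.sum_sigma']
  refine Finset.sum_nbij'
    (i := fun p => ⟨p ((Fin.last j).castSucc), fun i => p i.castSucc⟩)
    (j := fun x => Fin.snoc x.2 b) ?_ ?_ ?_ ?_ ?_
  · -- forward membership
    intro p hp
    rw [Finset.mem_filter] at hp
    obtain ⟨-, hp1, hp2⟩ := hp
    rw [Finset.mem_sigma]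
    refine ⟨Finset.mem_univ _, ?_⟩
    rw [Finset.mem_filter]
    refine ⟨Finset.mem_univ _, rfl, ?_⟩
    intro k
    show ((Finset.univ.filter (fun i : Fin j => p i.castSucc.castSucc = k)).card : ℤ)
        = (μ - e n (p ((Fin.last j).castSucc))) k
    have hsplit : ((Finset.univ.filter (fun i : Fin (j + 1) => p i.castSucc = k)).card : ℤ)
        = ((Finset.univ.filter (fun i : Fin j => p i.castSucc.castSucc = k)).card : ℤ)
          + (if p ((Fin.last j).castSucc) = k then 1 else 0) := by
      rw [Finset.card_filter, Finset.card_filter, Fin.sum_univ_castSucc]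
      push_cast
      ring
    have h2 := hp2 k
    rw [hsplit] at h2
    rw [Pi.sub_apply, e_apply]
    rcases eq_or_ne k (p ((Fin.last j).castSucc)) with hk | hk
    · rw [if_pos hk]
      rw [if_pos hk.symm] at h2
      omega
    · rw [if_neg hk]
      rw [if_neg (Ne.symm hk)] at h2
      omega
  · -- backward membership
    rintro ⟨c, p'⟩ hx
    dsimp only
    rw [Finset.mem_sigma, Finset.mem_filter] at hx
    obtain ⟨-, -, hx1, hx2⟩ := hx
    dsimp only at hx1 hx2
    rw [Finset.mem_filter]
    refine ⟨Finset.mem_univ _, Fin.snoc_last _ _, ?_⟩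
    intro k
    show ((Finset.univ.filter (fun i : Fin (j + 1) => Fin.snoc (α := fun _ => Fin (n + 1)) p' b i.castSucc = k)).card : ℤ)
        = μ k
    have hpred : (Finset.univ.filter (fun i : Fin (j + 1) => Fin.snoc (α := fun _ => Fin (n + 1)) p' b i.castSucc = k))
        = Finset.univ.filter (fun i : Fin (j + 1) => p' i = k) := by
      apply Finset.filter_congr
      intro i _
      simp [Fin.snoc_castSucc]
    rw [hpred, Finset.card_filter, Fin.sum_univ_castSucc, ← Finset.card_filter]
    have h2 := hx2 k
    rw [Pi.sub_apply, e_apply] at h2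
    rw [hx1]
    push_cast
    rcases eq_or_ne k c with hk | hk
    · rw [if_pos hk.symm]
      rw [if_pos hk] at h2
      omega
    · rw [if_neg (Ne.symm hk)]
      rw [if_neg hk] at h2
      omega
  · -- left inverse
    intro p hp
    dsimp only
    rw [Finset.mem_filter] at hp
    funext i
    refine Fin.lastCases ?_ ?_ i
    · show Fin.snoc (α := fun _ => Fin (n + 1)) (fun i : Fin (j + 1) => p i.castSucc) b (Fin.last (j + 1)) = p (Fin.last (j + 1))
      rw [Fin.snoc_last]
      exact hp.2.1.symm
    · intro i'
      show Fin.snoc (α := fun _ => Fin (n + 1)) (fun i : Fin (j + 1) => p i.castSucc) b i'.castSucc = p i'.castSucc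
      rw [Fin.snoc_castSucc]
  · -- right inverse
    rintro ⟨c, p'⟩ hx
    dsimp only
    rw [Finset.mem_sigma, Finset.mem_filter] at hx
    obtain ⟨-, -, hx1, -⟩ := hx
    dsimp only at hx1
    refine Sigma.ext ?_ (heq_of_eq ?_)
    · show Fin.snoc (α := fun _ => Fin (n + 1)) p' b ((Fin.last j).castSucc) = c
      rw [Fin.snoc_castSucc]
      exact hx1
    · show (fun i : Fin (j + 1) => Fin.snoc (α := fun _ => Fin (n + 1)) p' b i.castSucc) = p'
      funext i
      simp [Fin.snoc_castSucc]
  · -- values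
    intro p hp
    dsimp only
    rw [Finset.mem_filter] at hp
    obtain ⟨-, hp1, -⟩ := hp
    congr 1
    rw [Fin.sum_univ_castSucc]
    have hlast : (((Fin.last j : Fin (j + 1)) : ℤ) + 1) * H n (p (Fin.last j).succ) (p (Fin.last j).castSucc)
        = ((j : ℤ) + 1) * H n b (p ((Fin.last j).castSucc)) := by
      rw [Fin.succ_last, hp1]
      simp [Fin.val_last]
    rw [hlast]
    have hterm : ∀ i : Fin j,
        (((i.castSucc : Fin (j + 1)) : ℤ) + 1) * H n (p i.castSucc.succ) (p i.castSucc.castSucc)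
        = ((i : ℤ) + 1) * H n (p i.succ.castSucc) (p i.castSucc.castSucc) := by
      intro i
      rw [Fin.succ_castSucc]
      simp [Fin.coe_castSucc]
    rw [Finset.sum_congr rfl fun i _ => hterm i]
    ring

lemma g_E4 (n : ℕ) (j : ℕ) (ν : Fin (n + 1) → ℤ) :
    g n j (Fin.last n) ν =
      q ^ (j : ℤ) * g n j 0 ν - q ^ (j : ℤ) * (q ^ (j : ℤ) - 1) * g n (j - 1) 0 (ν - e n 0) := by
  cases j with
  | zero =>
    simp [g_zero_len]
  | succ j =>
    have h1 : g n (j + 1) (Fin.last n) ν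
        = q ^ ((j : ℤ) + 1) * ∑ c : Fin (n + 1), g n j c (ν - e n c) := by
      rw [g_rec, Finset.mul_sum]
      refine Finset.sum_congr rfl fun c _ => ?_
      rw [H_last_left, mul_one]
    have h2 : g n (j + 1) 0 ν
        = (q ^ ((j : ℤ) + 1) - 1) * g n j 0 (ν - e n 0)
          + ∑ c : Fin (n + 1), g n j c (ν - e n c) := by
      rw [g_rec]
      have hpt : ∀ c ∈ (Finset.univ : Finset (Fin (n + 1))),
          q ^ (((j : ℤ) + 1) * H n 0 c) * g n j c (ν - e n c)
          = (if c = 0 then (q ^ ((j : ℤ) + 1) - 1) * g n j 0 (ν - e n 0) else 0)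
            + g n j c (ν - e n c) := by
        intro c _
        by_cases hc : c = 0
        · subst hc
          rw [H_b_zero, mul_one, if_pos rfl]
          ring
        · rw [H_zero_left hc, mul_zero, zpow_zero, one_mul, if_neg hc, zero_add]
      rw [Finset.sum_congr rfl hpt, Finset.sum_add_distrib, Finset.sum_ite_eq']
      simp
    have hgoal : g n (j + 1 - 1) 0 (ν - e n 0) = g n j 0 (ν - e n 0) := rfl
    rw [hgoal, h1, h2]
    push_cast
    ring

/-- the `m = 0` case of the Weyl-reflection identity for the affine index
`i = 0` and `b ≠ n` (so that `φ_0(b) = 0`): with `d = μ_n - μ_0`,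
`q^d · g_j(b,μ) = g_j(b, μ + d·(e_0 - e_n))`. -/
theorem statement9 (n : ℕ) (hn : 1 ≤ n) (b : Fin (n + 1)) (hb : b ≠ Fin.last n)
    (j : ℕ) (μ : Fin (n + 1) → ℤ) :
    q ^ (μ (Fin.last n) - μ 0) * g n j b μ =
      g n j b (μ + (μ (Fin.last n) - μ 0) • (e n 0 - e n (Fin.last n))) := by
  have key : ∀ J : ℕ, ∀ b : Fin (n + 1), b ≠ Fin.last n → ∀ μ : Fin (n + 1) → ℤ,
      q ^ dd μ * g n J b μ = g n J b (sg μ) := by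
    intro J
    induction J using Nat.strong_induction_on with
    | h J IH =>
      cases J with
      | zero =>
        intro b hb μ
        by_cases hμ : μ = 0
        · subst hμ
          rw [sg_zero]
          have hd : dd (0 : Fin (n + 1) → ℤ) = 0 := by simp [dd]
          rw [hd, zpow_zero, one_mul]
        · rw [g_zero_len, g_zero_len, if_neg hμ,
            if_neg (fun h => hμ (sg_eq_zero hn h)), mul_zero]
      | succ j =>
        intro b hb μ
        have IHj : ∀ c : Fin (n + 1), c ≠ Fin.last n → ∀ ν,
            q ^ dd ν * g n j c ν = g n j c (sg ν) := IH j (Nat.lt_succ_self j)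
        have IHj1 : ∀ c : Fin (n + 1), c ≠ Fin.last n → ∀ ν,
            q ^ dd ν * g n (j - 1) c ν = g n (j - 1) c (sg ν) :=
          IH (j - 1) (Nat.lt_succ_of_le (Nat.sub_le j 1))
        have h0L := zero_ne_last hn
        rw [g_rec n j b μ, g_rec n j b (sg μ), Finset.mul_sum]
        set AA := q ^ ((j : ℤ) + 1) * g n j 0 (sg μ - e n 0)
            - q ^ dd μ * (q ^ ((j : ℤ) + 1) * g n j 0 (μ - e n 0)) with hAA
        set BB := g n j (Fin.last n) (sg μ - e n (Fin.last n))
            - q ^ dd μ * g n j (Fin.last n) (μ - e n (Fin.last n)) with hBB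
        have point : ∀ c ∈ (Finset.univ : Finset (Fin (n + 1))),
            q ^ (((j : ℤ) + 1) * H n b c) * g n j c (sg μ - e n c)
            = q ^ dd μ * (q ^ (((j : ℤ) + 1) * H n b c) * g n j c (μ - e n c))
              + ((if c = 0 then AA else 0) + (if c = Fin.last n then BB else 0)) := by
          intro c _
          by_cases hc0 : c = 0
          · subst hc0
            rw [if_pos rfl, if_neg h0L, H_b_zero, mul_one, hAA]
            ring
          · by_cases hcL : c = Fin.last n
            · subst hcL
              rw [if_neg (Ne.symm h0L), if_pos rfl, H_b_last hb, mul_zero, zpow_zero,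
                one_mul, hBB]
              ring
            · rw [if_neg hc0, if_neg hcL]
              have hmid : g n j c (sg μ - e n c) = q ^ dd μ * g n j c (μ - e n c) := by
                rw [sg_subc μ hc0 hcL, ← IHj c hcL (μ - e n c), dd_subc μ hc0 hcL]
              rw [hmid]
              ring
        rw [Finset.sum_congr rfl point, Finset.sum_add_distrib, Finset.sum_add_distrib,
          Finset.sum_ite_eq', Finset.sum_ite_eq']
        simp only [Finset.mem_univ, if_true]
        have hzero : AA + BB = 0 := by
          rw [hAA, hBB, sg_subL hn μ, sg_sub0 hn μ, g_E4 n j (sg (μ - e n 0)),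
            g_E4 n j (μ - e n (Fin.last n)), sg_sub0 hn (μ - e n 0),
            sub_right_comm μ (e n (Fin.last n)) (e n 0),
            ← IHj 0 h0L (μ - e n (Fin.last n)), ← IHj 0 h0L (μ - e n 0),
            ← IHj1 0 h0L (μ - e n 0 - e n (Fin.last n)),
            dd_subL hn μ, dd_subL hn (μ - e n 0), dd_sub0 hn μ]
          have hq1 : q ^ dd μ = q ^ (dd μ - 1) * q := by
            rw [← zpow_add_one₀ q_ne, sub_add_cancel]
          rw [add_sub_cancel_right, zpow_add_one₀ q_ne (dd μ), zpow_add_one₀ q_ne (j : ℤ), hq1]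
          ring
        rw [hzero, add_zero]
  exact key j b hb μ

end
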